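/- Let Q₁, Q₂ be key polynomials for ν of the same degree with ν(Q₁) < ν(Q₂). Then ε(Q₁) < ε(Q₂). -/
import Mathlib


open Polynomial

variable {K : Type*} [Field K]

/-- `ν` is a (rank one, real-valued) valuation on `K[x]`, specified on nonzero
polynomials. -/
def IsVal {K : Type*} [Field K] (ν : Polynomial K → ℝ) : Prop :=
  (∀ f g : Polynomial K, f ≠ 0 → g ≠ 0 → ν (f * g) = ν f + ν g) ∧
  (∀ f g : Polynomial K, f ≠ 0 → g ≠ 0 → f + g ≠ 0 → min (ν f) (ν g) ≤ ν (f + g))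

/-- The level `ε(f)` of a nonzero polynomial: the maximum of
`(ν f - ν (∂_b f))/b` over `b ≥ 1` (with `∂_b` the Hasse derivatives). -/
noncomputable def eps {K : Type*} [Field K] (ν : Polynomial K → ℝ) (f : Polynomial K) : ℝ :=
  sSup {r : ℝ | ∃ b : ℕ, 1 ≤ b ∧ hasseDeriv b f ≠ 0 ∧ r = (ν f - ν (hasseDeriv b f)) / b}

/-- The set `I(f)` of indices where the bound `ν(∂_b f) ≥ ν f - b ε(f)` is an equality. -/
def Iset {K : Type*} [Field K] (ν : Polynomial K → ℝ) (f : Polynomial K) : Set ℕ :=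
  {b | 1 ≤ b ∧ hasseDeriv b f ≠ 0 ∧ ν (hasseDeriv b f) = ν f - b * eps ν f}

/-- `Q` is a key polynomial for `ν`. -/
def IsKeyPol {K : Type*} [Field K] (ν : Polynomial K → ℝ) (Q : Polynomial K) : Prop :=
  Q.Monic ∧ 0 < Q.natDegree ∧
    ∀ f : Polynomial K, f ≠ 0 → f.natDegree < Q.natDegree → eps ν f < eps ν Q

/-- The coefficients of the `Q`-expansion of `f`:  `f = Σ i, qc Q f i * Q ^ i`
with `deg (qc Q f i) < deg Q`. -/
noncomputable def qc {K : Type*} [Field K] (Q : Polynomial K) : Polynomial K → ℕ → Polynomial K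
  | f, 0 => f %ₘ Q
  | f, (i + 1) => qc Q (f /ₘ Q) i

/-- The degree of the `Q`-expansion of `f`. -/
def degQ {K : Type*} [Field K] (Q f : Polynomial K) : ℕ := f.natDegree / Q.natDegree

/-- The truncation `ν_Q(f) = min_i ν (f_i Q^i)` of `ν` at `Q`. -/
noncomputable def nuQ {K : Type*} [Field K] (ν : Polynomial K → ℝ) (Q f : Polynomial K) : ℝ :=
  sInf {r : ℝ | ∃ i : ℕ, qc Q f i ≠ 0 ∧ r = ν (qc Q f i * Q ^ i)}

/-- The set `S_Q(f)` of indices attaining the minimum in `ν_Q(f)`. -/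
def SQ {K : Type*} [Field K] (ν : Polynomial K → ℝ) (Q f : Polynomial K) : Set ℕ :=
  {i | qc Q f i ≠ 0 ∧ ν (qc Q f i * Q ^ i) = nuQ ν Q f}

/-- `δ_Q(f) = max S_Q(f)`. -/
noncomputable def deltaQ {K : Type*} [Field K] (ν : Polynomial K → ℝ) (Q f : Polynomial K) : ℕ :=
  sSup (SQ ν Q f)

/-- The set `Ψ_α` of key polynomials for `ν` of degree `α`. -/
def Psi {K : Type*} [Field K] (ν : Polynomial K → ℝ) (α : ℕ) : Set (Polynomial K) :=
  {Q | IsKeyPol ν Q ∧ Q.natDegree = α}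

/-- The set `S_α` of (nonzero) polynomials whose value is not computed by any
truncation at a key polynomial of degree `α`. -/
def Slim {K : Type*} [Field K] (ν : Polynomial K → ℝ) (α : ℕ) : Set (Polynomial K) :=
  {f | f ≠ 0 ∧ ∀ Q ∈ Psi ν α, nuQ ν Q f < ν f}

/-- `p` is the characteristic exponent of the residue field of `ν`: either `p = 1`
and all nonzero natural numbers have value `0`, or `p` is a prime, `p` has
positive value (or is `0` in `K`), and naturals prime to `p` have value `0`. -/
def CharExp {K : Type*} [Field K] (ν : Polynomial K → ℝ) (p : ℕ) : Prop :=
  (p = 1 ∧ ∀ n : ℕ, (n : Polynomial K) ≠ 0 → ν (n : Polynomial K) = 0) ∨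
  (p.Prime ∧ ((p : Polynomial K) = 0 ∨ 0 < ν (p : Polynomial K)) ∧
    ∀ n : ℕ, ¬ p ∣ n → ν (n : Polynomial K) = 0)


lemma epsSet_finite (ν : Polynomial K → ℝ) (f : Polynomial K) :
    {r : ℝ | ∃ b : ℕ, 1 ≤ b ∧ hasseDeriv b f ≠ 0 ∧ r = (ν f - ν (hasseDeriv b f)) / b}.Finite := by
  apply Set.Finite.subset ((Set.finite_Iic f.natDegree).image
    (fun b => (ν f - ν (hasseDeriv b f)) / (b : ℝ)))
  rintro r ⟨b, hb1, hbne, rfl⟩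
  refine ⟨b, ?_, rfl⟩
  simp only [Set.mem_Iic]
  by_contra h
  exact hbne (hasseDeriv_eq_zero_of_lt_natDegree f b (lt_of_not_ge h))

lemma le_eps (ν : Polynomial K → ℝ) (f : Polynomial K) {b : ℕ} (hb : 1 ≤ b)
    (hne : hasseDeriv b f ≠ 0) : (ν f - ν (hasseDeriv b f)) / b ≤ eps ν f :=
  le_csSup (epsSet_finite ν f).bddAbove ⟨b, hb, hne, rfl⟩

lemma exists_eps_eq (ν : Polynomial K → ℝ) {f : Polynomial K} (hf : f.Monic)
    (hd : 0 < f.natDegree) :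
    ∃ b : ℕ, 1 ≤ b ∧ hasseDeriv b f ≠ 0 ∧ eps ν f = (ν f - ν (hasseDeriv b f)) / b := by
  have hne : hasseDeriv f.natDegree f ≠ 0 := by
    intro h
    have := congrArg (fun p => Polynomial.coeff p 0) h
    simp only [hasseDeriv_coeff, zero_add, Nat.choose_self, Nat.cast_one, one_mul,
      coeff_zero] at this
    exact one_ne_zero (hf.coeff_natDegree ▸ this)
  have hmem : eps ν f ∈ {r : ℝ | ∃ b : ℕ, 1 ≤ b ∧ hasseDeriv b f ≠ 0 ∧
      r = (ν f - ν (hasseDeriv b f)) / b} :=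
    Set.Nonempty.csSup_mem ⟨_, ⟨f.natDegree, hd, hne, rfl⟩⟩ (epsSet_finite ν f)
  obtain ⟨b, hb1, hb2, hb3⟩ := hmem
  exact ⟨b, hb1, hb2, hb3⟩

lemma val_one (ν : Polynomial K → ℝ) (hν : IsVal ν) : ν 1 = 0 := by
  have := hν.1 1 1 one_ne_zero one_ne_zero
  simp at this; linarith

lemma val_neg (ν : Polynomial K → ℝ) (hν : IsVal ν) {f : Polynomial K} (hf : f ≠ 0) :
    ν (-f) = ν f := by
  have h1 : ν ((-1 : Polynomial K) * (-1)) = ν (-1) + ν (-1) :=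
    hν.1 _ _ (by simp) (by simp)
  simp only [neg_mul, one_mul, neg_neg] at h1
  rw [val_one ν hν] at h1
  have h2 : ν (-f) = ν (-1) + ν f := by
    rw [← hν.1 (-1) f (by simp) hf]; ring_nf
  rw [h2]; linarith

lemma val_add_eq (ν : Polynomial K → ℝ) (hν : IsVal ν) {f g : Polynomial K}
    (hf : f ≠ 0) (hg : g ≠ 0) (hfg : f + g ≠ 0) (h : ν f < ν g) : ν (f + g) = ν f := by
  have h1 : min (ν f) (ν g) ≤ ν (f + g) := hν.2 f g hf hg hfg
  rw [min_eq_left h.le] at h1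
  rcases eq_or_lt_of_le h1 with he | hlt
  · exact he.symm
  · exfalso
    have hng : (-g : Polynomial K) ≠ 0 := neg_ne_zero.2 hg
    have h3 : min (ν (f + g)) (ν (-g)) ≤ ν (f + g + -g) := hν.2 _ _ hfg hng (by simpa)
    rw [val_neg ν hν hg] at h3
    simp only [add_neg_cancel_right] at h3
    exact absurd h3 (not_le.2 (lt_min hlt h))

/-- For key polynomials of the same degree, `ν Q₁ < ν Q₂` implies `ε Q₁ < ε Q₂`. -/
theorem eps_lt_of_val_lt (ν : Polynomial K → ℝ) (hν : IsVal ν)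
    (Q₁ Q₂ : Polynomial K) (hQ₁ : IsKeyPol ν Q₁) (hQ₂ : IsKeyPol ν Q₂)
    (hdeg : Q₁.natDegree = Q₂.natDegree) (hval : ν Q₁ < ν Q₂) :
    eps ν Q₁ < eps ν Q₂ := by
  -- Let h = Q₂ - Q₁; it is nonzero of degree < deg Q₂.
  set h : Polynomial K := Q₂ - Q₁ with hh
  have hQ1ne : Q₁ ≠ 0 := hQ₁.1.ne_zero
  have hQ2ne : Q₂ ≠ 0 := hQ₂.1.ne_zero
  have hQne : Q₁ ≠ Q₂ := fun he => absurd hval (by rw [he]; exact lt_irrefl _)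
  have hhne : h ≠ 0 := sub_ne_zero.2 (Ne.symm hQne)
  have hdegh : h.natDegree < Q₂.natDegree := by
    have hdlt : h.degree < Q₂.degree := by
      apply degree_sub_lt
      · rw [degree_eq_natDegree hQ2ne, degree_eq_natDegree hQ1ne, hdeg]
      · exact hQ2ne
      · rw [hQ₂.1.leadingCoeff, hQ₁.1.leadingCoeff]
    exact natDegree_lt_natDegree hhne hdlt
  have hdegh1 : h.natDegree < Q₁.natDegree := hdeg ▸ hdegh
  -- ν h = ν Q₁
  have hνh : ν h = ν Q₁ := by
    have : h = -Q₁ + Q₂ := by ring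
    rw [this, val_add_eq ν hν (neg_ne_zero.2 hQ1ne) hQ2ne (by rw [← this]; exact hhne)
      (by rw [val_neg ν hν hQ1ne]; exact hval), val_neg ν hν hQ1ne]
  -- ε h < ε Q₁ and ε h < ε Q₂ by keyness
  have hepsh1 : eps ν h < eps ν Q₁ := hQ₁.2.2 h hhne hdegh1
  -- pick b attaining ε Q₁
  obtain ⟨b, hb1, hbne, hbeq⟩ := exists_eps_eq ν hQ₁.1 hQ₁.2.1
  have hbpos : (0 : ℝ) < b := by exact_mod_cast hb1
  have hvdQ1 : ν (hasseDeriv b Q₁) = ν Q₁ - b * eps ν Q₁ := by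
    have h5 := hbeq
    rw [eq_div_iff hbpos.ne'] at h5
    linarith
  -- ∂_b Q₂ = ∂_b Q₁ + ∂_b h
  have hsum : hasseDeriv b Q₂ = hasseDeriv b Q₁ + hasseDeriv b h := by
    rw [hh]; rw [← map_add]; ring_nf
  -- ν ∂_b Q₂ = ν ∂_b Q₁, and ∂_b Q₂ ≠ 0
  have key : hasseDeriv b Q₂ ≠ 0 ∧ ν (hasseDeriv b Q₂) = ν (hasseDeriv b Q₁) := by
    by_cases hzero : hasseDeriv b h = 0
    · rw [hsum, hzero, add_zero]; exact ⟨hbne, rfl⟩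
    · have hlt : ν (hasseDeriv b Q₁) < ν (hasseDeriv b h) := by
        have hle : (ν h - ν (hasseDeriv b h)) / b ≤ eps ν h := le_eps ν h hb1 hzero
        have : ν h - ν (hasseDeriv b h) ≤ b * eps ν h := by
          rw [div_le_iff₀ hbpos] at hle; linarith
        have hbh : ν Q₁ - b * eps ν h ≤ ν (hasseDeriv b h) := by rw [← hνh]; linarith
        have : b * eps ν h < b * eps ν Q₁ := by
          exact (mul_lt_mul_iff_right₀ hbpos).2 hepsh1
        rw [hvdQ1]; linarith
      have hne2 : hasseDeriv b Q₂ ≠ 0 := by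
        rw [hsum]
        intro hc
        have : hasseDeriv b h = -(hasseDeriv b Q₁) := by linear_combination hc
        rw [this, val_neg ν hν hbne] at hlt
        exact lt_irrefl _ hlt
      refine ⟨hne2, ?_⟩
      rw [hsum]
      exact val_add_eq ν hν hbne hzero (hsum ▸ hne2) hlt
  -- conclude
  have hle2 : (ν Q₂ - ν (hasseDeriv b Q₂)) / b ≤ eps ν Q₂ := le_eps ν Q₂ hb1 key.1
  rw [key.2, hvdQ1] at hle2
  have : eps ν Q₁ < (ν Q₂ - (ν Q₁ - b * eps ν Q₁)) / b := by
    rw [lt_div_iff₀ hbpos]; ring_nf; nlinarith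
  linarith
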